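/- arXiv:1606.04203 — 3 statements merged into one kernel-verified Lean document; each statement's English description precedes it below -/
import Mathlib

section
/- (Error probability bounds for the SD-DSPRT.) For every sensor k and all thresholds A, B > 0: P₀(ζ^{(k)}_{T_sd^{(k)}} ≥ B) ≤ e^{−B} and P₁(ζ^{(k)}_{T_sd^{(k)}} ≤ −A) ≤ e^{−A}. -/
/-!
Write `ξₙ = ∑_{p ∈ Fₙ} g_p` for independent `g_p` with `E[exp g_p] = 1` and increasing finite
index sets `Fₙ`. Then `exp ξₙ` is a nonnegative martingale of mean one for the filtration
generated by the revealed samples, so Ville's inequality (Doob's maximal inequality over an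
unbounded horizon) gives `P(∃ n, ξₙ ≥ B) ≤ e^{-B}`, an event containing `ξ_T ≥ B`. The SD-DSPRT
statistic of sensor `k` is such a sum, each sample `s_m^{(ℓ)}` entering once it has travelled
to `k`; the bound under `P₁` is the same statement for `-s`.
-/

open MeasureTheory ProbabilityTheory Finset Real

namespace MeasureTheory.Submartingale

variable {Ω : Type*} {m : MeasurableSpace Ω} {μ : Measure Ω} [IsFiniteMeasure μ]
  {𝒢 : Filtration ℕ m} {f : ℕ → Ω → ℝ}

/-- Ville's inequality. -/
theorem measure_exists_ge_le (hf : Submartingale f 𝒢 μ) (hnonneg : 0 ≤ f) {c ε : ℝ}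
    (hε : 0 < ε) (hc : ∀ n, ∫ ω, f n ω ∂μ ≤ c) :
    μ {ω | ∃ n, ε ≤ f n ω} ≤ ENNReal.ofReal (c / ε) := by
  set S : ℕ → Set Ω := fun n =>
    {ω | ε ≤ (range (n + 1)).sup' nonempty_range_add_one fun k => f k ω}
  have hS_mono : Monotone S := fun n n' hn ω hω =>
    le_trans (b := (range (n + 1)).sup' nonempty_range_add_one fun k => f k ω) hω
      (sup'_mono _ (range_subset_range.2 (by omega)) _)
  have hS_union : {ω | ∃ n, ε ≤ f n ω} = ⋃ n, S n := by
    ext ω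
    simp only [Set.mem_ofPred_eq, Set.mem_iUnion, S, le_sup'_iff, mem_range]
    exact ⟨fun ⟨n, hn⟩ => ⟨n, n, n.lt_succ_self, hn⟩, fun ⟨_, k, _, hk⟩ => ⟨k, hk⟩⟩
  rw [hS_union, hS_mono.measure_iUnion, ENNReal.ofReal_div_of_pos hε,
    ENNReal.le_div_iff_mul_le (.inl (by simpa using hε)) (.inl ENNReal.ofReal_ne_top),
    ENNReal.iSup_mul]
  refine iSup_le fun n => ?_
  calc μ (S n) * ENNReal.ofReal ε = ε.toNNReal * μ (S n) := mul_comm _ _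
    _ ≤ ENNReal.ofReal (∫ ω in S n, f n ω ∂μ) := by
      simpa [S, Real.coe_toNNReal _ hε.le] using maximal_ineq hf hnonneg (ε := ε.toNNReal) n
    _ ≤ ENNReal.ofReal c := ENNReal.ofReal_le_ofReal <|
      (setIntegral_le_integral (hf.integrable n) (.of_forall (hnonneg n))).trans (hc n)

end MeasureTheory.Submartingale

namespace ProbabilityTheory

variable {Ω ι : Type*} {g : ι → Ω → ℝ}

abbrev finsetSigmaAlgebra (g : ι → Ω → ℝ) (S : Finset ι) : MeasurableSpace Ω :=
  ⨆ p ∈ S, MeasurableSpace.comap (g p) inferInstance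

theorem finsetSigmaAlgebra_mono {S T : Finset ι} (hST : S ⊆ T) :
    finsetSigmaAlgebra g S ≤ finsetSigmaAlgebra g T :=
  biSup_mono fun _ hp => hST hp

theorem stronglyMeasurable_exp_sum_finsetSigmaAlgebra {S T : Finset ι} (hST : S ⊆ T) :
    StronglyMeasurable[finsetSigmaAlgebra g T] fun ω => exp (∑ p ∈ S, g p ω) :=
  (Measurable.exp (Finset.measurable_sum _ fun p hp => (comap_measurable (g p)).mono
    (le_iSup₂ (f := fun p _ => MeasurableSpace.comap (g p) inferInstance) p (hST hp))
    le_rfl)).stronglyMeasurable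

variable [MeasurableSpace Ω]

theorem finsetSigmaAlgebra_le (hg : ∀ p, Measurable (g p)) (S : Finset ι) :
    finsetSigmaAlgebra g S ≤ ‹MeasurableSpace Ω› :=
  iSup₂_le fun p _ => (hg p).comap_le

def finsetFiltration (hg : ∀ p, Measurable (g p)) {F : ℕ → Finset ι} (hF : Monotone F) :
    Filtration ℕ ‹MeasurableSpace Ω› where
  seq n := finsetSigmaAlgebra g (F n)
  mono' _ _ hnm := finsetSigmaAlgebra_mono (hF hnm)
  le' n := finsetSigmaAlgebra_le hg (F n)

variable {P : Measure Ω}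

theorem iIndepFun.indep_finsetSigmaAlgebra (hg : ∀ p, Measurable (g p))
    (hindep : iIndepFun g P) {S T : Finset ι} (hST : Disjoint S T) :
    Indep (finsetSigmaAlgebra g S) (finsetSigmaAlgebra g T) P :=
  indep_iSup_of_disjoint (fun p => (hg p).comap_le) ((iIndepFun_iff_iIndep _ _ _).1 hindep)
    (Finset.disjoint_coe.2 hST)
theorem iIndepFun.integral_exp_sum (hg : ∀ p, Measurable (g p)) (hindep : iIndepFun g P)
    {S : Finset ι} (hexp : ∀ p ∈ S, ∫ ω, exp (g p ω) ∂P = 1) :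
    ∫ ω, exp (∑ p ∈ S, g p ω) ∂P = 1 := by
  have := hindep.mgf_sum (t := 1) hg S
  simp only [mgf, one_mul, Finset.sum_apply] at this
  rw [this, Finset.prod_eq_one hexp]

variable [IsProbabilityMeasure P]

theorem iIndepFun.integrable_exp_sum (hg : ∀ p, Measurable (g p)) (hindep : iIndepFun g P)
    {S : Finset ι} (hexp : ∀ p ∈ S, ∫ ω, exp (g p ω) ∂P = 1) :
    Integrable (fun ω => exp (∑ p ∈ S, g p ω)) P := by
  simpa using hindep.integrable_exp_mul_sum (t := 1) hg fun p hp =>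
    Integrable.of_integral_ne_zero (by simp [hexp p hp])

theorem iIndepFun.martingale_exp_sum (hg : ∀ p, Measurable (g p)) (hindep : iIndepFun g P)
    {F : ℕ → Finset ι} (hF : Monotone F) (hexp : ∀ n, ∀ p ∈ F n, ∫ ω, exp (g p ω) ∂P = 1) :
    Martingale (fun n ω => exp (∑ p ∈ F n, g p ω)) (finsetFiltration hg hF) P := by
  classical
  refine ⟨fun n => stronglyMeasurable_exp_sum_finsetSigmaAlgebra subset_rfl, fun i j hij => ?_⟩
  set h : Ω → ℝ := fun ω => exp (∑ p ∈ F j \ F i, g p ω)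
  have hsplit : (fun ω => exp (∑ p ∈ F j, g p ω)) = (fun ω => exp (∑ p ∈ F i, g p ω)) * h := by
    funext ω
    simp only [Pi.mul_apply, h, ← exp_add, ← Finset.sum_sdiff (hF hij), add_comm]
  have hexp_diff : ∀ p ∈ F j \ F i, ∫ ω, exp (g p ω) ∂P = 1 :=
    fun p hp => hexp j p (Finset.sdiff_subset hp)
  have hh_int : Integrable h P := hindep.integrable_exp_sum hg hexp_diff
  have hh_condExp : P[h | finsetFiltration hg hF i] =ᵐ[P] fun _ => 1 := by
    rw [← hindep.integral_exp_sum hg hexp_diff]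
    exact condExp_indep_eq (finsetSigmaAlgebra_le hg _) ((finsetFiltration hg hF).le i)
      (stronglyMeasurable_exp_sum_finsetSigmaAlgebra subset_rfl)
      (hindep.indep_finsetSigmaAlgebra hg Finset.sdiff_disjoint)
  beta_reduce
  rw [hsplit]
  filter_upwards [condExp_mul_of_stronglyMeasurable_left (m := finsetFiltration hg hF i)
    (stronglyMeasurable_exp_sum_finsetSigmaAlgebra subset_rfl)
    (hsplit ▸ hindep.integrable_exp_sum hg (hexp j)) hh_int, hh_condExp] with ω h1 h2
  rw [h1, Pi.mul_apply, h2, mul_one]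

theorem iIndepFun.measure_exists_sum_ge_le (hg : ∀ p, Measurable (g p)) (hindep : iIndepFun g P)
    {F : ℕ → Finset ι} (hF : Monotone F) (hexp : ∀ n, ∀ p ∈ F n, ∫ ω, exp (g p ω) ∂P = 1)
    (B : ℝ) :
    P {ω | ∃ n, B ≤ ∑ p ∈ F n, g p ω} ≤ ENNReal.ofReal (exp (-B)) := by
  have hmart := hindep.martingale_exp_sum hg hF hexp
  simpa [exp_neg, one_div] using hmart.submartingale.measure_exists_ge_le
    (fun n ω => (exp_pos _).le) (exp_pos B)
    fun n => (hindep.integral_exp_sum hg (hexp n)).le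

end ProbabilityTheory

section Dissemination

variable {κ : Type*} [Fintype κ] [DecidableEq κ]

-- The samples `s_m^{(ℓ)}` received by time `t` under delays `ν ℓ`: the term of time `j` is
-- `s_{j+1-ν ℓ}^{(ℓ)}`, and those with `j < ν ℓ` read the dummy sample `s_0`, so are omitted.
def disseminatedSamples (ν : κ → ℕ) (t : ℕ) : Finset (κ × ℕ) :=
  ((Finset.univ ×ˢ Finset.Icc 1 t).filter fun q => ν q.1 ≤ q.2).image
    fun q => (q.1, q.2 + 1 - ν q.1)

variable {ν : κ → ℕ}

theorem disseminatedSamples_mono : Monotone (disseminatedSamples ν) := fun _ _ htt' =>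
  image_subset_image <| filter_subset_filter _ <|
    product_subset_product_right (Icc_subset_Icc_right htt')

theorem one_le_of_mem_disseminatedSamples {t : ℕ} {p : κ × ℕ}
    (hp : p ∈ disseminatedSamples ν t) : 1 ≤ p.2 := by
  obtain ⟨q, hq, rfl⟩ := mem_image.1 hp
  simp only [mem_filter] at hq
  omega

theorem sum_disseminatedSamples {M : Type*} [AddCommMonoid M] (x : κ → ℕ → M)
    (hx : ∀ ℓ, x ℓ 0 = 0) (t : ℕ) :
    ∑ p ∈ disseminatedSamples ν t, x p.1 p.2 = ∑ j ∈ Icc 1 t, ∑ ℓ, x ℓ (j + 1 - ν ℓ) := by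
  rw [disseminatedSamples, sum_image, sum_filter_of_ne, sum_product, sum_comm]
  · intro q _ hq
    by_contra! hlt
    exact hq (by rw [show q.2 + 1 - ν q.1 = 0 by omega, hx])
  · rintro ⟨ℓ, j⟩ hq ⟨ℓ', j'⟩ hq' h
    simp only [coe_filter, Set.mem_ofPred_eq, mem_product, mem_Icc] at hq hq'
    simp only [Prod.mk.injEq] at h ⊢
    obtain ⟨rfl, h⟩ := h
    exact ⟨rfl, by omega⟩

end Dissemination

theorem stmt_5_general
    {Ω : Type*} [MeasurableSpace Ω]
    (P0 P1 : Measure Ω) [IsProbabilityMeasure P0] [IsProbabilityMeasure P1]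
    (K : ℕ)
    (s : Fin K → ℕ → Ω → ℝ)
    (hmeas : ∀ k t, Measurable (s k t))
    -- convention: zero sample at time 0
    (hzero : ∀ k ω, s k 0 ω = 0)
    -- mutual independence under each measure
    (hindep0 : iIndepFun (fun (p : Fin K × ℕ) ω => s p.1 p.2 ω) P0)
    (hindep1 : iIndepFun (fun (p : Fin K × ℕ) ω => s p.1 p.2 ω) P1)
    -- the sₜ⁽ᵏ⁾ are log-likelihood ratios
    (hexp0 : ∀ k t, 1 ≤ t → ∫ ω, Real.exp (s k t ω) ∂P0 = 1)
    (hexp1 : ∀ k t, 1 ≤ t → ∫ ω, Real.exp (-(s k t ω)) ∂P1 = 1)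
    (ν : Fin K → Fin K → ℕ)
    -- sample-dissemination statistic
    (ζ : Fin K → ℕ → Ω → ℝ)
    (hζ : ∀ k t ω, ζ k t ω = ∑ j ∈ Finset.Icc 1 t, ∑ ℓ : Fin K, s ℓ (j + 1 - ν ℓ k) ω)
    -- the SD-DSPRT stopping time
    (T : Fin K → ℝ → ℝ → Ω → ℕ) :
    ∀ (k : Fin K) (A B : ℝ), 0 < A → 0 < B →
      P0 {ω | B ≤ ζ k (T k A B ω) ω} ≤ ENNReal.ofReal (Real.exp (-B)) ∧
      P1 {ω | ζ k (T k A B ω) ω ≤ -A} ≤ ENNReal.ofReal (Real.exp (-A)) := by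
  intro k A B _ _
  set F := disseminatedSamples (ν · k)
  have hζF : ∀ t ω, ζ k t ω = ∑ p ∈ F t, s p.1 p.2 ω := fun t ω => by
    rw [hζ, sum_disseminatedSamples (fun ℓ m => s ℓ m ω) (hzero · ω)]
  constructor
  · calc P0 {ω | B ≤ ζ k (T k A B ω) ω}
        ≤ P0 {ω | ∃ t, B ≤ ∑ p ∈ F t, s p.1 p.2 ω} :=
          measure_mono fun ω hω => ⟨T k A B ω, hζF _ ω ▸ hω⟩
      _ ≤ _ := hindep0.measure_exists_sum_ge_le (fun p => hmeas p.1 p.2)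
          disseminatedSamples_mono
          (fun _ p hp => hexp0 p.1 p.2 (one_le_of_mem_disseminatedSamples hp)) B
  · calc P1 {ω | ζ k (T k A B ω) ω ≤ -A}
        ≤ P1 {ω | ∃ t, A ≤ ∑ p ∈ F t, -s p.1 p.2 ω} :=
          measure_mono fun ω hω => ⟨T k A B ω, by
            rw [sum_neg_distrib, ← hζF]
            exact le_neg_of_le_neg hω⟩
      _ ≤ _ := (hindep1.comp (fun _ x => -x) fun _ => measurable_neg).measure_exists_sum_ge_le
          (fun p => (hmeas p.1 p.2).neg) disseminatedSamples_mono
          (fun _ p hp => hexp1 p.1 p.2 (one_le_of_mem_disseminatedSamples hp)) A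

/-- Error probability bounds for the SD-DSPRT: for every sensor `k` and thresholds
`A, B > 0`, `P₀(ζ⁽ᵏ⁾_{T_sd} ≥ B) ≤ e^{−B}` and `P₁(ζ⁽ᵏ⁾_{T_sd} ≤ −A) ≤ e^{−A}`. -/
theorem stmt_5
    {Ω : Type*} [MeasurableSpace Ω]
    (P0 P1 : Measure Ω) [IsProbabilityMeasure P0] [IsProbabilityMeasure P1]
    (K : ℕ) (hK : 1 ≤ K)
    (s : Fin K → ℕ → Ω → ℝ)
    (hmeas : ∀ k t, Measurable (s k t))
    -- convention: zero sample at time 0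
    (hzero : ∀ k ω, s k 0 ω = 0)
    -- mutual independence under each measure
    (hindep0 : iIndepFun (fun (p : Fin K × ℕ) ω => s p.1 p.2 ω) P0)
    (hindep1 : iIndepFun (fun (p : Fin K × ℕ) ω => s p.1 p.2 ω) P1)
    -- the sₜ⁽ᵏ⁾ are log-likelihood ratios
    (hexp0 : ∀ k t, 1 ≤ t → ∫ ω, Real.exp (s k t ω) ∂P0 = 1)
    (hexp1 : ∀ k t, 1 ≤ t → ∫ ω, Real.exp (-(s k t ω)) ∂P1 = 1)
    -- connected communication graph and propagation delays (graph distances)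
    (G : SimpleGraph (Fin K)) (hconn : G.Connected)
    (ν : Fin K → Fin K → ℕ)
    (hν : ∀ ℓ k, ν ℓ k = if ℓ = k then 1 else G.dist ℓ k)
    -- sample-dissemination statistic
    (ζ : Fin K → ℕ → Ω → ℝ)
    (hζ : ∀ k t ω, ζ k t ω = ∑ j ∈ Finset.Icc 1 t, ∑ ℓ : Fin K, s ℓ (j + 1 - ν ℓ k) ω)
    -- the SD-DSPRT stopping time
    (T : Fin K → ℝ → ℝ → Ω → ℕ)
    (hT : ∀ k A B ω, T k A B ω = sInf {t : ℕ | 1 ≤ t ∧ ζ k t ω ∉ Set.Ioo (-A) B})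
    -- almost sure finiteness under both measures
    (hfin0 : ∀ (k : Fin K) (A B : ℝ), 0 < A → 0 < B →
      ∀ᵐ ω ∂P0, ∃ t, 1 ≤ t ∧ ζ k t ω ∉ Set.Ioo (-A) B)
    (hfin1 : ∀ (k : Fin K) (A B : ℝ), 0 < A → 0 < B →
      ∀ᵐ ω ∂P1, ∃ t, 1 ≤ t ∧ ζ k t ω ∉ Set.Ioo (-A) B) :
    ∀ (k : Fin K) (A B : ℝ), 0 < A → 0 < B →
      P0 {ω | B ≤ ζ k (T k A B ω) ω} ≤ ENNReal.ofReal (Real.exp (-B)) ∧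
      P1 {ω | ζ k (T k A B ω) ω ≤ -A} ≤ ENNReal.ofReal (Real.exp (-A)) :=
  stmt_5_general P0 P1 K s hmeas hzero hindep0 hindep1 hexp0 hexp1 ν ζ hζ T
end

section
/- Let μ > 0 and c > 0, let X be a real random variable with the Gaussian law N(μ, 1), and set s := μX − μ²/2. Then E[exp(c|s|)] = e^{(c+1)c μ²/2} Φ((c + 1/2)μ) + e^{(c−1)c μ²/2} Φ((c − 1/2)μ), where Φ denotes the cumulative distribution function of the standard Gaussian law N(0,1). -/
/-! Exponential tilting: `e^{bx}` times the `N(m, v)` density is `e^{bm + vb²/2}` times the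
`N(m + vb, v)` density. Splitting `∫ e^{b|x - a|} dN(m, v)` at `a` therefore yields two Gaussian
tail probabilities. Since `s = μ (X - μ/2)` with `μ > 0`, the theorem is the case
`v = 1`, `m = μ`, `a = μ/2`, `b = cμ`. -/

open MeasureTheory ProbabilityTheory Real Set NNReal

lemma exp_mul_mul_gaussianPDFReal {v : ℝ≥0} (hv : v ≠ 0) (b m x : ℝ) :
    rexp (b * x) * gaussianPDFReal m v x
      = rexp (b * m + v * b ^ 2 / 2) * gaussianPDFReal (m + v * b) v x := by
  have hv' : (v : ℝ) ≠ 0 := NNReal.coe_ne_zero.mpr hv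
  simp only [gaussianPDFReal]
  rw [mul_left_comm, ← exp_add, mul_left_comm, ← exp_add]
  congr 2
  field_simp
  ring

lemma setIntegral_exp_mul_gaussianReal {v : ℝ≥0} (hv : v ≠ 0) (b m : ℝ) (s : Set ℝ) :
    ∫ x in s, rexp (b * x) ∂gaussianReal m v
      = rexp (b * m + v * b ^ 2 / 2) * (gaussianReal (m + v * b) v s).toReal := by
  rw [gaussianReal_apply_eq_integral _ hv, ENNReal.toReal_ofReal
    (integral_nonneg fun x ↦ gaussianPDFReal_nonneg _ _ x), ← integral_const_mul,
    gaussianReal_of_var_ne_zero _ hv, setIntegral_withDensity_eq_setIntegral_toReal_smul' s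
      (measurable_gaussianPDF _ _) (ae_of_all _ fun _ ↦ gaussianPDF_lt_top)]
  refine integral_congr_ae (ae_of_all _ fun x ↦ ?_)
  dsimp only
  rw [toReal_gaussianPDF, smul_eq_mul, mul_comm, exp_mul_mul_gaussianPDFReal hv]

lemma integral_exp_mul_abs_sub_gaussianReal {v : ℝ≥0} (hv : v ≠ 0) (b a m : ℝ) :
    ∫ x, rexp (b * |x - a|) ∂gaussianReal m v
      = rexp (b * (m - a) + v * b ^ 2 / 2) * (gaussianReal (m + v * b) v (Ioi a)).toReal
        + rexp (b * (a - m) + v * b ^ 2 / 2) * (gaussianReal (m - v * b) v (Iic a)).toReal := by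
  have h_left : EqOn (fun x ↦ rexp (b * |x - a|)) (fun x ↦ rexp (b * a) * rexp (-b * x))
      (Iic a) := fun x hx ↦ by
    dsimp only
    rw [abs_of_nonpos (sub_nonpos.2 hx), ← exp_add]
    ring_nf
  have h_right : EqOn (fun x ↦ rexp (b * |x - a|)) (fun x ↦ rexp (-(b * a)) * rexp (b * x))
      (Ioi a) := fun x hx ↦ by
    dsimp only
    rw [abs_of_pos (sub_pos.2 hx), ← exp_add]
    ring_nf
  have h_int_left : IntegrableOn (fun x ↦ rexp (b * |x - a|)) (Iic a) (gaussianReal m v) :=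
    ((integrable_exp_mul_gaussianReal _).const_mul _).integrableOn.congr_fun h_left.symm
      measurableSet_Iic
  have h_int_right : IntegrableOn (fun x ↦ rexp (b * |x - a|)) (Ioi a) (gaussianReal m v) :=
    ((integrable_exp_mul_gaussianReal _).const_mul _).integrableOn.congr_fun h_right.symm
      measurableSet_Ioi
  have h_integral_left : ∫ x in Iic a, rexp (b * |x - a|) ∂gaussianReal m v
      = rexp (b * (a - m) + v * b ^ 2 / 2) * (gaussianReal (m - v * b) v (Iic a)).toReal := by
    rw [setIntegral_congr_fun measurableSet_Iic h_left, integral_const_mul,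
      setIntegral_exp_mul_gaussianReal hv, ← mul_assoc, ← exp_add, mul_neg, ← sub_eq_add_neg]
    ring_nf
  have h_integral_right : ∫ x in Ioi a, rexp (b * |x - a|) ∂gaussianReal m v
      = rexp (b * (m - a) + v * b ^ 2 / 2) * (gaussianReal (m + v * b) v (Ioi a)).toReal := by
    rw [setIntegral_congr_fun measurableSet_Ioi h_right, integral_const_mul,
      setIntegral_exp_mul_gaussianReal hv, ← mul_assoc, ← exp_add]
    ring_nf
  rw [← intervalIntegral.integral_Iic_add_Ioi h_int_left h_int_right, h_integral_left,
    h_integral_right, add_comm]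

lemma gaussianReal_Iic (m : ℝ) (v : ℝ≥0) (a : ℝ) :
    gaussianReal m v (Iic a) = gaussianReal 0 v (Iic (a - m)) := by
  conv_lhs => rw [← zero_add m, ← gaussianReal_map_add_const]
  rw [Measure.map_apply (by fun_prop) measurableSet_Iic, preimage_add_const_Iic]

lemma gaussianReal_Ioi {v : ℝ≥0} (hv : v ≠ 0) (m a : ℝ) :
    gaussianReal m v (Ioi a) = gaussianReal 0 v (Iic (m - a)) := by
  have := nullSingletonClass_gaussianReal (μ := 0) hv
  conv_lhs => rw [← sub_zero m, ← gaussianReal_map_const_sub]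
  rw [Measure.map_apply (by fun_prop) measurableSet_Ioi, preimage_const_sub_Ioi,
    measure_congr Iio_ae_eq_Iic]

theorem stmt_12_general
    {Ω : Type*} [MeasurableSpace Ω]
    (P : Measure Ω)
    (μ c : ℝ) (hμ : 0 < μ)
    (X : Ω → ℝ)
    (hX : Measure.map X P = gaussianReal μ 1)
    (Φ : ℝ → ℝ)
    (hΦ : ∀ x, Φ x = ((gaussianReal 0 1) (Set.Iic x)).toReal) :
    ∫ ω, Real.exp (c * |μ * X ω - μ ^ 2 / 2|) ∂P
      = Real.exp ((c + 1) * c * μ ^ 2 / 2) * Φ ((c + 1 / 2) * μ)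
        + Real.exp ((c - 1) * c * μ ^ 2 / 2) * Φ ((c - 1 / 2) * μ) := by
  have hX_meas : AEMeasurable X P :=
    .of_map_ne_zero (hX ▸ IsProbabilityMeasure.ne_zero _)
  have h_abs (x : ℝ) : c * |μ * x - μ ^ 2 / 2| = c * μ * |x - μ / 2| := by
    rw [show μ * x - μ ^ 2 / 2 = μ * (x - μ / 2) by ring, abs_mul, abs_of_pos hμ, mul_assoc]
  rw [← integral_map hX_meas (f := fun x ↦ rexp (c * |μ * x - μ ^ 2 / 2|)) (by fun_prop), hX]
  simp_rw [h_abs]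
  rw [integral_exp_mul_abs_sub_gaussianReal one_ne_zero, gaussianReal_Iic,
    gaussianReal_Ioi one_ne_zero, hΦ, hΦ, NNReal.coe_one]
  ring_nf

/-- Exponential absolute moment of the Gaussian log-likelihood ratio: if
`X ~ N(μ, 1)` with `μ > 0` and `s = μX − μ²/2`, then for every `c > 0`,
`E[exp(c|s|)] = e^{(c+1)cμ²/2} Φ((c+1/2)μ) + e^{(c−1)cμ²/2} Φ((c−1/2)μ)`,
where `Φ` is the standard Gaussian CDF. -/
theorem stmt_12
    {Ω : Type*} [MeasurableSpace Ω]
    (P : Measure Ω) [IsProbabilityMeasure P]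
    (μ c : ℝ) (hμ : 0 < μ) (hc : 0 < c)
    (X : Ω → ℝ) (hXmeas : Measurable X)
    (hX : Measure.map X P = gaussianReal μ 1)
    (Φ : ℝ → ℝ)
    (hΦ : ∀ x, Φ x = ((gaussianReal 0 1) (Set.Iic x)).toReal) :
    ∫ ω, Real.exp (c * |μ * X ω - μ ^ 2 / 2|) ∂P
      = Real.exp ((c + 1) * c * μ ^ 2 / 2) * Φ ((c + 1 / 2) * μ)
        + Real.exp ((c - 1) * c * μ ^ 2 / 2) * Φ ((c - 1 / 2) * μ) :=
  stmt_12_general P μ c hμ X hX Φ hΦ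
end

section
/- (Sample dissemination reaches every sensor along shortest paths.) Let G be a connected undirected graph on the vertex set {1,…,K}, let d(ℓ,k) denote graph distance, and set ν_{ℓ→k} := d(ℓ,k) for ℓ ≠ k and ν_{k→k} := 1. Define, for each sensor k, sets of indexed samples M_t^{(k)}, V_t^{(k)} ⊆ {1,…,K} × {1,2,…} recursively by M_0^{(k)} := ∅, M_{−1}^{(k)} := ∅, V_t^{(k)} := {(k,t)} ∪ (M_{t−1}^{(k)} \ (M_{t−2}^{(k)} ∪ {(k,t−1)})), and M_t^{(k)} := M_{t−1}^{(k)} ∪ {(k,t)} ∪ ⋃_{ℓ ∈ N_k} V_t^{(ℓ)}, where N_k is the set of neighbours of k in G. Then for every sensor k and every t ≥ 1, M_t^{(k)} = {(ℓ, j) : ℓ ∈ {1,…,K}, 1 ≤ j ≤ t − ν_{ℓ→k} + 1}. -/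
/-!
A sample `(m, j)` reaches sensor `k` at time `j + ν_{m→k} - 1`: it is relayed one hop per time
step along a shortest path. Since `M_{t-1} \ M_{t-2}` is exactly what arrived at time `t - 1`, a
sensor forwards each foreign sample once, in the step after it arrives. The induction on `t` then
rests on two facts about `ν`: it changes by at most one across an edge, and every `k` with
`ν_{m→k} ≥ 2` has a neighbour `ℓ ≠ m` with `ν_{m→ℓ} = ν_{m→k} - 1`.
-/

namespace SimpleGraph

variable {V : Type*} {G : SimpleGraph V}

theorem Connected.exists_adj_dist_add_one_eq (hG : G.Connected) {u v : V} (huv : u ≠ v) :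
    ∃ w, G.Adj v w ∧ G.dist u w + 1 = G.dist u v := by
  obtain ⟨p, hp⟩ := hG.exists_walk_length_eq_dist v u
  obtain ⟨w, hvw, q, rfl⟩ := Walk.exists_eq_cons_of_ne huv.symm p
  refine ⟨w, hvw, le_antisymm ?_ ?_⟩
  · have hq := dist_le q
    rw [Walk.length_cons, dist_comm] at hp
    rw [dist_comm]
    omega
  · have h₁ : G.dist w v = 1 := dist_eq_one_iff_adj.mpr hvw.symm
    have := hG.dist_triangle (u := u) (v := w) (w := v)
    omega

end SimpleGraph

open SimpleGraph

section Delay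

variable {V : Type*} [DecidableEq V] (G : SimpleGraph V)

/-- `ν_{ℓ→k}`: a sensor's own samples count as one step away. -/
noncomputable def delay (ℓ k : V) : ℕ :=
  if ℓ = k then 1 else G.dist ℓ k

/-- `{(ℓ, j) : 1 ≤ j ≤ t − ν_{ℓ→k} + 1}`, written without truncated subtraction. -/
def arrivedSamples (k : V) (t : ℕ) : Set (V × ℕ) :=
  {p | 1 ≤ p.2 ∧ p.2 + delay G p.1 k ≤ t + 1}

/-- The foreign samples reaching `ℓ` exactly at time `n`, which `ℓ` broadcasts at `n + 1`. -/
def relayedSamples (ℓ : V) (n : ℕ) : Set (V × ℕ) :=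
  {p | 1 ≤ p.2 ∧ p.2 + delay G p.1 ℓ = n + 1 ∧ p.1 ≠ ℓ}

variable {G}

@[simp]
theorem delay_self (k : V) : delay G k k = 1 := by
  simp [delay]

theorem delay_of_ne {ℓ k : V} (h : ℓ ≠ k) : delay G ℓ k = G.dist ℓ k := by
  simp [delay, h]

theorem one_le_delay (hG : G.Connected) (ℓ k : V) : 1 ≤ delay G ℓ k := by
  rcases eq_or_ne ℓ k with rfl | h
  · simp
  · rw [delay_of_ne h]
    exact hG.pos_dist_of_ne h

theorem delay_eq_one_iff {ℓ k : V} : delay G ℓ k = 1 ↔ ℓ = k ∨ G.Adj ℓ k := by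
  rcases eq_or_ne ℓ k with rfl | h
  · simp
  · simp [delay_of_ne h, h]

theorem delay_le_delay_add_one (hG : G.Connected) (m : V) {k ℓ : V} (h : G.Adj k ℓ) :
    delay G m k ≤ delay G m ℓ + 1 := by
  rcases eq_or_ne m k with rfl | hmk
  · simp
  rcases eq_or_ne m ℓ with rfl | hmℓ
  · simp [delay_eq_one_iff.mpr (Or.inr h.symm)]
  rw [delay_of_ne hmk, delay_of_ne hmℓ]
  have h₁ : G.dist ℓ k = 1 := dist_eq_one_iff_adj.mpr h.symm
  have := hG.dist_triangle (u := m) (v := ℓ) (w := k)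
  omega

theorem exists_adj_delay_add_one_eq (hG : G.Connected) {m k : V} (h : 2 ≤ delay G m k) :
    ∃ ℓ, G.Adj k ℓ ∧ m ≠ ℓ ∧ delay G m ℓ + 1 = delay G m k := by
  have hmk : m ≠ k := by
    rintro rfl
    simp at h
  obtain ⟨ℓ, hkℓ, hℓ⟩ := hG.exists_adj_dist_add_one_eq hmk
  rw [delay_of_ne hmk] at h ⊢
  have hmℓ : m ≠ ℓ := by
    rintro rfl
    simp at hℓ
    omega
  exact ⟨ℓ, hkℓ, hmℓ, by rw [delay_of_ne hmℓ, hℓ]⟩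

theorem arrivedSamples_zero (hG : G.Connected) (k : V) : arrivedSamples G k 0 = ∅ := by
  ext ⟨m, j⟩
  have := one_le_delay hG m k
  simp only [arrivedSamples, Set.mem_ofPred_eq, Set.mem_empty_iff_false, iff_false]
  omega

theorem arrivedSamples_diff (hG : G.Connected) (ℓ : V) (n : ℕ) :
    arrivedSamples G ℓ n \ (arrivedSamples G ℓ (n - 1) ∪ {(ℓ, n)}) =
      relayedSamples G ℓ n := by
  ext ⟨m, j⟩
  have := one_le_delay hG m ℓ
  simp only [arrivedSamples, relayedSamples, Set.mem_sdiff, Set.mem_union, Set.mem_ofPred_eq,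
    Set.mem_singleton_iff, Prod.mk.injEq, not_or, not_and]
  constructor
  · rintro ⟨⟨hj, hle⟩, hlt, hself⟩
    refine ⟨hj, by omega, fun hmℓ => hself hmℓ ?_⟩
    subst hmℓ
    simp only [delay_self] at hle hlt
    omega
  · rintro ⟨hj, heq, hmℓ⟩
    exact ⟨⟨hj, heq.le⟩, fun _ => by omega, fun h => absurd h hmℓ⟩

theorem arrivedSamples_succ (hG : G.Connected) (k : V) (n : ℕ) :
    arrivedSamples G k (n + 1) = arrivedSamples G k n ∪ {(k, n + 1)} ∪
      ⋃ ℓ ∈ G.neighborSet k, ({(ℓ, n + 1)} ∪ relayedSamples G ℓ n) := by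
  ext ⟨m, j⟩
  simp only [arrivedSamples, relayedSamples, Set.mem_union, Set.mem_singleton_iff,
    Set.mem_iUnion, mem_neighborSet, Set.mem_ofPred_eq, Prod.mk.injEq, exists_prop]
  constructor
  · rintro ⟨hj, hle⟩
    rcases Nat.lt_or_ge (j + delay G m k) (n + 2) with hlt | hge
    · exact Or.inl (Or.inl ⟨hj, by omega⟩)
    rcases Nat.lt_or_ge (delay G m k) 2 with hone | htwo
    · have h₁ : delay G m k = 1 := by have := one_le_delay hG m k; omega
      have hjn : j = n + 1 := by omega
      rcases delay_eq_one_iff.mp h₁ with rfl | hmk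
      · exact Or.inl (Or.inr ⟨rfl, hjn⟩)
      · exact Or.inr ⟨m, hmk.symm, Or.inl ⟨rfl, hjn⟩⟩
    · obtain ⟨ℓ, hkℓ, hmℓ, hℓ⟩ := exists_adj_delay_add_one_eq hG htwo
      exact Or.inr ⟨ℓ, hkℓ, Or.inr ⟨hj, by omega, hmℓ⟩⟩
  · rintro ((⟨hj, hle⟩ | ⟨rfl, rfl⟩) | ⟨ℓ, hkℓ, ⟨rfl, rfl⟩ | ⟨hj, heq, -⟩⟩)
    · exact ⟨hj, by omega⟩
    · simp
    · simp [delay_eq_one_iff.mpr (Or.inr hkℓ.symm)]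
    · have := delay_le_delay_add_one hG m hkℓ
      exact ⟨hj, by omega⟩

end Delay

theorem stmt_15_general
    (K : ℕ)
    (G : SimpleGraph (Fin K)) (hconn : G.Connected)
    (ν : Fin K → Fin K → ℕ)
    (hν : ∀ ℓ k, ν ℓ k = if ℓ = k then 1 else G.dist ℓ k)
    (M V : Fin K → ℕ → Set (Fin K × ℕ))
    (hM0 : ∀ k, M k 0 = ∅)
    -- broadcast sets: V_t⁽ᵏ⁾ = {(k,t)} ∪ (M_{t−1}⁽ᵏ⁾ \ (M_{t−2}⁽ᵏ⁾ ∪ {(k,t−1)}))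
    (hV : ∀ (k : Fin K) (t : ℕ), 1 ≤ t →
      V k t = {(k, t)} ∪ (M k (t - 1) \ (M k (t - 2) ∪ {(k, t - 1)})))
    -- storage update: M_t⁽ᵏ⁾ = M_{t−1}⁽ᵏ⁾ ∪ {(k,t)} ∪ ⋃_{ℓ ∈ N_k} V_t⁽ˡ⁾
    (hMrec : ∀ (k : Fin K) (t : ℕ), 1 ≤ t →
      M k t = M k (t - 1) ∪ {(k, t)} ∪ ⋃ ℓ ∈ G.neighborSet k, V ℓ t) :
    ∀ (k : Fin K) (t : ℕ), 1 ≤ t →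
      M k t = {p : Fin K × ℕ | 1 ≤ p.2 ∧ p.2 + ν p.1 k ≤ t + 1} := by
  obtain rfl : ν = delay G := funext₂ hν
  suffices h : ∀ t k, M k t = arrivedSamples G k t from fun k t _ => h t k
  intro t
  induction t using Nat.strong_induction_on with
  | _ t ih =>
    intro k
    cases t with
    | zero => rw [hM0, arrivedSamples_zero hconn]
    | succ n =>
      have hVn : ∀ ℓ, V ℓ (n + 1) = {(ℓ, n + 1)} ∪ relayedSamples G ℓ n := fun ℓ => by
        rw [hV ℓ (n + 1) n.succ_pos, Nat.add_sub_cancel, show n + 1 - 2 = n - 1 by omega,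
          ih n n.lt_succ_self, ih (n - 1) (by omega), arrivedSamples_diff hconn]
      rw [hMrec k (n + 1) n.succ_pos, Nat.add_sub_cancel, ih n n.lt_succ_self,
        arrivedSamples_succ hconn]
      simp only [hVn]

/-- Sample dissemination reaches every sensor along shortest paths: with
`ν_{ℓ→k}` the graph distance (and `ν_{k→k} := 1`), the recursively defined stored
sets satisfy `M_t⁽ᵏ⁾ = {(ℓ, j) : 1 ≤ j ≤ t − ν_{ℓ→k} + 1}` for all `t ≥ 1`. -/
theorem stmt_15
    (K : ℕ) (hK : 1 ≤ K)
    (G : SimpleGraph (Fin K)) (hconn : G.Connected)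
    (ν : Fin K → Fin K → ℕ)
    (hν : ∀ ℓ k, ν ℓ k = if ℓ = k then 1 else G.dist ℓ k)
    (M V : Fin K → ℕ → Set (Fin K × ℕ))
    (hM0 : ∀ k, M k 0 = ∅)
    -- broadcast sets: V_t⁽ᵏ⁾ = {(k,t)} ∪ (M_{t−1}⁽ᵏ⁾ \ (M_{t−2}⁽ᵏ⁾ ∪ {(k,t−1)}))
    (hV : ∀ (k : Fin K) (t : ℕ), 1 ≤ t →
      V k t = {(k, t)} ∪ (M k (t - 1) \ (M k (t - 2) ∪ {(k, t - 1)})))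
    -- storage update: M_t⁽ᵏ⁾ = M_{t−1}⁽ᵏ⁾ ∪ {(k,t)} ∪ ⋃_{ℓ ∈ N_k} V_t⁽ˡ⁾
    (hMrec : ∀ (k : Fin K) (t : ℕ), 1 ≤ t →
      M k t = M k (t - 1) ∪ {(k, t)} ∪ ⋃ ℓ ∈ G.neighborSet k, V ℓ t) :
    ∀ (k : Fin K) (t : ℕ), 1 ≤ t →
      M k t = {p : Fin K × ℕ | 1 ≤ p.2 ∧ p.2 + ν p.1 k ≤ t + 1} :=
  stmt_15_general K G hconn ν hν M V hM0 hV hMrec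
end
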